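/- arXiv:1803.05414 — 2 statements merged into one kernel-verified Lean document; each statement's English description precedes it below -/
import Mathlib

section
/- For any graph G, the closed linearity and open linearity satisfy lin(G) - 1 ≤ lin°(G) ≤ 2·lin(G). -/
def IsIntervalOf {V : Type*} {n : ℕ} (σ : V ≃ Fin n) (I : Set V) : Prop :=
  ∃ a b : Fin n, I = {v | a ≤ σ v ∧ σ v ≤ b}

def closedNbhd {V : Type*} (G : SimpleGraph V) (x : V) : Set V := {y | G.Adj x y ∨ y = x}

def HasClosedLineModel {V : Type*} [Fintype V] (G : SimpleGraph V) (p : ℕ) : Prop :=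
  ∃ σ : Fin p → (V ≃ Fin (Fintype.card V)),
    ∀ x : V, ∃ I : Fin p → Set V,
      (∀ i, IsIntervalOf (σ i) (I i)) ∧ (⋃ i, I i) = closedNbhd G x

def HasOpenLineModel {V : Type*} [Fintype V] (G : SimpleGraph V) (p : ℕ) : Prop :=
  ∃ σ : Fin p → (V ≃ Fin (Fintype.card V)),
    ∀ x : V, ∃ I : Fin p → Set V,
      (∀ i, IsIntervalOf (σ i) (I i)) ∧ (⋃ i, I i) = G.neighborSet x

noncomputable def linCl {V : Type*} [Fintype V] (G : SimpleGraph V) : ℕ :=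
  sInf {p | HasClosedLineModel G p}

noncomputable def linOp {V : Type*} [Fintype V] (G : SimpleGraph V) : ℕ :=
  sInf {p | HasOpenLineModel G p}

def HasContigModel {V : Type*} [Fintype V] (G : SimpleGraph V) (k : ℕ) : Prop :=
  ∃ σ : V ≃ Fin (Fintype.card V),
    ∀ x : V, ∃ I : Fin k → Set V,
      (∀ i, IsIntervalOf σ (I i)) ∧ (⋃ i, I i) = closedNbhd G x

noncomputable def contCl {V : Type*} [Fintype V] (G : SimpleGraph V) : ℕ :=
  sInf {k | HasContigModel G k}

/-!
Splitting each interval covering `N[x]` in a closed model at the position of `x` in its order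
gives two intervals whose union is that interval minus `x`, so doubling the orders turns a closed
model into an open one. Conversely, one extra order, in which `{x}` is an interval, turns an open
model into a closed one.
-/

open Set

section Intervals

variable {V : Type*} {n : ℕ}

-- `Icc 1 0 = ∅`, so the empty set is an interval only when `n ≥ 2`.
lemma Fin.exists_eq_Icc_of_ordConnected (hn : 2 ≤ n) {S : Set (Fin n)} (hS : S.OrdConnected) :
    ∃ a b, S = Icc a b := by
  obtain ⟨m, rfl⟩ := Nat.exists_eq_add_of_le' (one_le_two.trans hn)
  rcases S.eq_empty_or_nonempty with rfl | hne
  · exact ⟨1, 0, (Icc_eq_empty (by simp; omega)).symm⟩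
  · exact ⟨_, _, hne.ordConnected_iff_of_bdd'.1 hS⟩

lemma isIntervalOf_preimage (σ : V ≃ Fin n) (hn : 2 ≤ n) {S : Set (Fin n)}
    (hS : S.OrdConnected) : IsIntervalOf σ (σ ⁻¹' S) := by
  obtain ⟨a, b, rfl⟩ := Fin.exists_eq_Icc_of_ordConnected hn hS
  exact ⟨a, b, rfl⟩

lemma isIntervalOf_singleton (σ : V ≃ Fin n) (x : V) : IsIntervalOf σ {x} :=
  ⟨σ x, σ x, by ext v; simp [← le_antisymm_iff]⟩

lemma Set.Subsingleton.isIntervalOf (σ : V ≃ Fin n) (hn : 2 ≤ n) {I : Set V}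
    (hI : I.Subsingleton) : IsIntervalOf σ I := by
  obtain rfl | ⟨x, rfl⟩ := hI.eq_empty_or_singleton
  · simpa using isIntervalOf_preimage σ hn ordConnected_empty
  · exact isIntervalOf_singleton σ x

lemma IsIntervalOf.inter_preimage {σ : V ≃ Fin n} (hn : 2 ≤ n) {I : Set V}
    (hI : IsIntervalOf σ I) {S : Set (Fin n)} (hS : S.OrdConnected) :
    IsIntervalOf σ (I ∩ σ ⁻¹' S) := by
  obtain ⟨a, b, rfl⟩ := hI
  exact isIntervalOf_preimage σ hn (ordConnected_Icc.inter hS)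

end Intervals

section LineCovers

variable {V : Type*} {n : ℕ} {ι κ : Type*}

-- A line model with an arbitrary index type, reindexed to `Fin p` only at the end.
def IsLineCover (σ : ι → V ≃ Fin n) (N : V → Set V) : Prop :=
  ∀ x, ∃ I : ι → Set V, (∀ i, IsIntervalOf (σ i) (I i)) ∧ ⋃ i, I i = N x

lemma IsLineCover.comp_equiv {σ : ι → V ≃ Fin n} {N : V → Set V} (h : IsLineCover σ N)
    (e : κ ≃ ι) : IsLineCover (σ ∘ e) N := fun x => by
  obtain ⟨I, hI, hU⟩ := h x
  exact ⟨I ∘ e, fun k => hI (e k), hU ▸ e.surjective.iUnion_comp I⟩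

lemma isLineCover_const (σ : V ≃ Fin n) (hn : 2 ≤ n) (N : V → Set V) :
    IsLineCover (fun _ : V => σ) N := fun x =>
  ⟨fun v => N x ∩ {v},
    fun v => (subsingleton_singleton.anti inter_subset_right).isIntervalOf σ hn,
    by ext; simp⟩

lemma IsLineCover.insert_self {σ : ι → V ≃ Fin n} {N : V → Set V} (h : IsLineCover σ N)
    (τ : V ≃ Fin n) : IsLineCover (fun o : Option ι => o.elim τ σ) (fun x => insert x (N x)) :=
  fun x => by
  obtain ⟨I, hI, hU⟩ := h x
  refine ⟨fun o => o.elim {x} I, ?_, ?_⟩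
  · rintro (_ | i)
    exacts [isIntervalOf_singleton τ x, hI i]
  · rw [iUnion_option]
    change {x} ∪ ⋃ i, I i = insert x (N x)
    rw [hU, insert_eq]

lemma IsLineCover.diff_self {σ : ι → V ≃ Fin n} {N : V → Set V} (hn : 2 ≤ n)
    (h : IsLineCover σ N) : IsLineCover (fun j : Bool × ι => σ j.2) (fun x => N x \ {x}) :=
  fun x => by
  obtain ⟨I, hI, hU⟩ := h x
  refine ⟨fun j => I j.2 ∩ σ j.2 ⁻¹' cond j.1 (Ioi (σ j.2 x)) (Iio (σ j.2 x)),
    fun ⟨b, i⟩ => (hI i).inter_preimage hn ?_, ?_⟩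
  · cases b
    exacts [ordConnected_Iio, ordConnected_Ioi]
  · ext v
    simp only [← hU, mem_iUnion, mem_sdiff, mem_singleton_iff, Prod.exists, Bool.exists_bool]
    simp [← exists_or, ← and_or_left, lt_or_lt_iff_ne]

end LineCovers

section Models

variable {V : Type*}

lemma closedNbhd_eq_insert (G : SimpleGraph V) (x : V) :
    closedNbhd G x = insert x (G.neighborSet x) := by
  ext; simp [closedNbhd, or_comm, eq_comm]

lemma neighborSet_eq_closedNbhd_diff (G : SimpleGraph V) (x : V) :
    G.neighborSet x = closedNbhd G x \ {x} := by
  ext v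
  simp only [SimpleGraph.mem_neighborSet, closedNbhd, mem_sdiff, mem_ofPred_eq, mem_singleton_iff]
  exact ⟨fun h => ⟨Or.inl h, (G.ne_of_adj h).symm⟩, fun h => h.1.resolve_right h.2⟩

variable [Fintype V] {G : SimpleGraph V}

lemma IsLineCover.hasOpenLineModel {ι : Type*} [Fintype ι] {σ : ι → V ≃ Fin (Fintype.card V)}
    (h : IsLineCover σ G.neighborSet) : HasOpenLineModel G (Fintype.card ι) :=
  ⟨_, h.comp_equiv (Fintype.equivFin ι).symm⟩

lemma IsLineCover.hasClosedLineModel {ι : Type*} [Fintype ι] {σ : ι → V ≃ Fin (Fintype.card V)}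
    (h : IsLineCover σ (closedNbhd G)) : HasClosedLineModel G (Fintype.card ι) :=
  ⟨_, h.comp_equiv (Fintype.equivFin ι).symm⟩

lemma HasOpenLineModel.hasClosedLineModel_add_one {q : ℕ} (h : HasOpenLineModel G q) :
    HasClosedLineModel G (q + 1) := by
  obtain ⟨σ, hσ : IsLineCover σ G.neighborSet⟩ := h
  have hcov := hσ.insert_self (Fintype.equivFin V)
  rw [← funext (closedNbhd_eq_insert G)] at hcov
  simpa using hcov.hasClosedLineModel

lemma HasClosedLineModel.hasOpenLineModel_two_mul (hn : 2 ≤ Fintype.card V) {p : ℕ}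
    (h : HasClosedLineModel G p) : HasOpenLineModel G (2 * p) := by
  obtain ⟨σ, hσ : IsLineCover σ (closedNbhd G)⟩ := h
  have hcov := hσ.diff_self hn
  rw [← funext (neighborSet_eq_closedNbhd_diff G)] at hcov
  simpa using hcov.hasOpenLineModel

lemma hasOpenLineModel_zero_of_eq_bot (hG : G = ⊥) : HasOpenLineModel G 0 :=
  ⟨finZeroElim, fun x => ⟨finZeroElim, finZeroElim, by simp [hG]⟩⟩

variable (G)

lemma hasOpenLineModel_card (hn : 2 ≤ Fintype.card V) : HasOpenLineModel G (Fintype.card V) :=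
  (isLineCover_const (Fintype.equivFin V) hn _).hasOpenLineModel

lemma hasClosedLineModel_card (hn : 2 ≤ Fintype.card V) :
    HasClosedLineModel G (Fintype.card V) :=
  (isLineCover_const (Fintype.equivFin V) hn _).hasClosedLineModel

end Models

section Linearity

variable {V : Type*} [Fintype V] (G : SimpleGraph V)

lemma two_le_card_of_ne_bot (hG : G ≠ ⊥) : 2 ≤ Fintype.card V := by
  obtain ⟨x, y, hxy⟩ := G.ne_bot_iff_exists_adj.1 hG
  exact Fintype.one_lt_card_iff.2 ⟨x, y, hxy.ne⟩

lemma exists_hasOpenLineModel : ∃ p, HasOpenLineModel G p := by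
  rcases eq_or_ne G ⊥ with hG | hG
  · exact ⟨0, hasOpenLineModel_zero_of_eq_bot hG⟩
  · exact ⟨_, hasOpenLineModel_card G (two_le_card_of_ne_bot G hG)⟩

lemma hasOpenLineModel_linOp : HasOpenLineModel G (linOp G) :=
  Nat.sInf_mem (exists_hasOpenLineModel G)

lemma hasClosedLineModel_linCl (hn : 2 ≤ Fintype.card V) : HasClosedLineModel G (linCl G) :=
  Nat.sInf_mem (s := {p | HasClosedLineModel G p}) ⟨_, hasClosedLineModel_card G hn⟩

lemma linCl_le_linOp_add_one : linCl G ≤ linOp G + 1 :=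
  Nat.sInf_le (hasOpenLineModel_linOp G).hasClosedLineModel_add_one

lemma linOp_le_two_mul_linCl : linOp G ≤ 2 * linCl G := by
  rcases eq_or_ne G ⊥ with hG | hG
  · exact (Nat.sInf_le (hasOpenLineModel_zero_of_eq_bot hG)).trans (Nat.zero_le _)
  · have hn := two_le_card_of_ne_bot G hG
    exact Nat.sInf_le ((hasClosedLineModel_linCl G hn).hasOpenLineModel_two_mul hn)

end Linearity

theorem lin_open_closed {V : Type*} [Fintype V] (G : SimpleGraph V) :
    linCl G - 1 ≤ linOp G ∧ linOp G ≤ 2 * linCl G :=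
  ⟨Nat.sub_le_iff_le_add.2 (linCl_le_linOp_add_one G), linOp_le_two_mul_linCl G⟩
end

section
/- Let G be the cograph obtained as the series composition of l ≥ 1 graphs, each consisting of two isolated vertices a_i, b_i (i.e., G is the complete multipartite graph K_{2,2,…,2} with l parts of size 2, the cocktail party graph). Then the closed linearity of G is at most 2. -/
/-- The cocktail party graph with `l` parts of size 2: vertices `(i, j)` are adjacent
iff they lie in different parts. -/
def cocktail (l : ℕ) : SimpleGraph (Fin l × Fin 2) where
  Adj x y := x.1 ≠ y.1
  symm := ⟨fun _ _ h => Ne.symm h⟩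
  loopless := ⟨fun _ h => h rfl⟩

/-! Each closed neighbourhood of the cocktail party graph misses exactly one vertex `m`, the
partner of its centre. For any linear order, the complement of `m` is the union of the two
intervals strictly before and strictly after `m`, so one order used twice is a closed
2-line-model. -/

section Intervals

variable {V : Type*} {n : ℕ}

lemma isIntervalOf_of_val_iff (σ : V ≃ Fin n) {I : Set V} (a b : Fin n)
    (h : ∀ v, v ∈ I ↔ (a : ℕ) ≤ σ v ∧ (σ v : ℕ) ≤ b) : IsIntervalOf σ I :=
  ⟨a, b, Set.ext h⟩

-- Empty sets are written as the interval `[1, 0]`, which is why the order needs two points.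
lemma isIntervalOf_lt (hn : 2 ≤ n) (σ : V ≃ Fin n) (p : Fin n) :
    IsIntervalOf σ {v | σ v < p} := by
  rcases Nat.eq_zero_or_pos p with hp | hp
  · exact isIntervalOf_of_val_iff σ ⟨1, by omega⟩ ⟨0, by omega⟩ fun v => by
      simp only [Set.mem_ofPred_eq, Fin.lt_def]; omega
  · exact isIntervalOf_of_val_iff σ ⟨0, by omega⟩ ⟨p - 1, by omega⟩ fun v => by
      simp only [Set.mem_ofPred_eq, Fin.lt_def]; omega

lemma isIntervalOf_gt (hn : 2 ≤ n) (σ : V ≃ Fin n) (p : Fin n) :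
    IsIntervalOf σ {v | p < σ v} := by
  by_cases hp : (p : ℕ) + 1 = n
  · exact isIntervalOf_of_val_iff σ ⟨1, by omega⟩ ⟨0, by omega⟩ fun v => by
      simp only [Set.mem_ofPred_eq, Fin.lt_def]; omega
  · exact isIntervalOf_of_val_iff σ ⟨p + 1, by omega⟩ ⟨n - 1, by omega⟩ fun v => by
      simp only [Set.mem_ofPred_eq, Fin.lt_def]; omega

lemma compl_singleton_eq_lt_union_gt (σ : V ≃ Fin n) (m : V) :
    ({m}ᶜ : Set V) = {v | σ v < σ m} ∪ {v | σ m < σ v} := by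
  ext v
  simp [σ.injective.ne_iff]

end Intervals

lemma hasClosedLineModel_two_of_closedNbhd_eq_compl {V : Type*} [Fintype V]
    (G : SimpleGraph V) (hV : 2 ≤ Fintype.card V) (partner : V → V)
    (hG : ∀ x, closedNbhd G x = {partner x}ᶜ) : HasClosedLineModel G 2 := by
  set σ := Fintype.equivFin V
  refine ⟨fun _ => σ, fun x =>
    ⟨![{v | σ v < σ (partner x)}, {v | σ (partner x) < σ v}], ?_, ?_⟩⟩
  · intro i
    fin_cases i
    · exact isIntervalOf_lt hV σ _
    · exact isIntervalOf_gt hV σ _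
  · rw [hG, compl_singleton_eq_lt_union_gt σ]
    ext v
    simp [Fin.exists_fin_two]

lemma cocktail_closedNbhd (l : ℕ) (x : Fin l × Fin 2) :
    closedNbhd (cocktail l) x = {(x.1, x.2 + 1)}ᶜ := by
  obtain ⟨i, a⟩ := x
  ext ⟨j, b⟩
  by_cases hij : i = j
  · subst hij
    revert a b
    simp [closedNbhd, cocktail]
  · simp [closedNbhd, cocktail, hij, Ne.symm hij]

theorem cocktail_linearity (l : ℕ) (hl : 1 ≤ l) : linCl (cocktail l) ≤ 2 :=
  Nat.sInf_le <| hasClosedLineModel_two_of_closedNbhd_eq_compl _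
    (by simp only [Fintype.card_prod, Fintype.card_fin]; omega) _ (cocktail_closedNbhd l)
end
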